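/- arXiv:1309.5679 — 5 statements merged into one kernel-verified Lean document; each statement's English description precedes it below -/
import Mathlib

section
/- For any real 3×3 matrix B, the coefficient of x² in the characteristic polynomial det(x·I₄ − K) of Davenport's K-matrix K equals −2(tr B)² + tr(adj S) − zᵀz, where S = B + Bᵀ, adj S denotes the adjugate matrix of S, and z = (B₂₃ − B₃₂, B₃₁ − B₁₃, B₁₂ − B₂₁)ᵀ. -/
/-!
The coefficient of `x²` in the characteristic polynomial of a `4 × 4` matrix is the sum of its
six principal `2 × 2` minors. For `K`, where `tr S = 2 tr B`, that sum collapses to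
`−2 (tr B)² + tr (adj S) − zᵀz`.
-/

open Finset

theorem Finset.sum_powersetCard_two {α β : Type*} [LinearOrder α] [AddCommMonoid β]
    (s : Finset α) (g : Finset α → β) :
    ∑ t ∈ s.powersetCard 2, g t = ∑ p ∈ s ×ˢ s with p.1 < p.2, g {p.1, p.2} := by
  symm
  refine sum_bij (fun p _ => {p.1, p.2}) ?_ ?_ ?_ fun _ _ => rfl
  · rintro ⟨a, b⟩ hab
    simp only [mem_filter, mem_product] at hab
    simp [mem_powersetCard, insert_subset_iff, hab.1.1, hab.1.2, hab.2.ne]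
  · rintro ⟨a, b⟩ hab ⟨c, d⟩ hcd h
    simp only [mem_filter] at hab hcd
    have hc : c ∈ ({a, b} : Finset α) := h ▸ mem_insert_self c {d}
    have hd : d ∈ ({a, b} : Finset α) := h ▸ mem_insert_of_mem (mem_singleton_self d)
    simp only [mem_insert, mem_singleton] at hc hd
    grind
  · intro t ht
    obtain ⟨hts, htc⟩ := mem_powersetCard.1 ht
    obtain ⟨x, y, hxy, rfl⟩ := card_eq_two.1 htc
    rcases hxy.lt_or_gt with h | h
    · exact ⟨(x, y), by simp_all [insert_subset_iff], rfl⟩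
    · exact ⟨(y, x), by simp_all [insert_subset_iff], pair_comm y x⟩

namespace Matrix

variable {n R : Type*} [CommRing R]

theorem det_submatrix_pair [DecidableEq n] (M : Matrix n n R) {i j : n} (hij : i ≠ j) :
    (M.submatrix (Subtype.val : ({i, j} : Finset n) → n) Subtype.val).det =
      M i i * M j j - M i j * M j i := by
  let e : Fin 2 ≃ ({i, j} : Finset n) :=
    { toFun := ![⟨i, by simp⟩, ⟨j, by simp⟩]
      invFun := fun x => if x.1 = i then 0 else 1
      left_inv := by intro k; fin_cases k <;> simp [hij.symm]
      right_inv := by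
        rintro ⟨x, hx⟩
        obtain rfl | rfl := by simpa only [mem_insert, mem_singleton] using hx
        all_goals simp [hij.symm] }
  rw [← det_submatrix_equiv_self e, det_fin_two]
  simp [e]

theorem charpoly_coeff_card_sub_two [Fintype n] [LinearOrder n] (M : Matrix n n R)
    (hn : 2 ≤ Fintype.card n) :
    M.charpoly.coeff (Fintype.card n - 2) =
      ∑ p : n × n with p.1 < p.2, (M p.1 p.1 * M p.2 p.2 - M p.1 p.2 * M p.2 p.1) := by
  rw [charpoly_coeff_eq_sum_minors M 2 hn, neg_one_sq, one_mul, sum_powersetCard_two,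
    univ_product_univ]
  exact sum_congr rfl fun p hp => det_submatrix_pair M (mem_filter.1 hp).2.ne

end Matrix

open Matrix

/-- Davenport's K-matrix of a real 3×3 matrix `B`. -/
noncomputable def davenportK (B : Matrix (Fin 3) (Fin 3) ℝ) : Matrix (Fin 4) (Fin 4) ℝ :=
  let S := B + Bᵀ
  let t := B.trace
  let z : Fin 3 → ℝ := ![B 1 2 - B 2 1, B 2 0 - B 0 2, B 0 1 - B 1 0]
  !![S 0 0 - t, S 0 1,     S 0 2,     z 0;
     S 1 0,     S 1 1 - t, S 1 2,     z 1;
     S 2 0,     S 2 1,     S 2 2 - t, z 2;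
     z 0,       z 1,       z 2,       t  ]

/-- The coefficient of `x²` in the characteristic polynomial of Davenport's K-matrix
equals `−2(tr B)² + tr(adj S) − zᵀz` with `S = B + Bᵀ`. -/
theorem davenportK_charpoly_coeff_two (B : Matrix (Fin 3) (Fin 3) ℝ)
    (z : Fin 3 → ℝ) (hz : z = ![B 1 2 - B 2 1, B 2 0 - B 0 2, B 0 1 - B 1 0]) :
    (davenportK B).charpoly.coeff 2
      = -2 * B.trace ^ 2 + (B + Bᵀ).adjugate.trace - z ⬝ᵥ z := by
  subst hz
  refine (charpoly_coeff_card_sub_two (davenportK B) (by simp)).trans ?_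
  simp only [davenportK, of_apply, Matrix.cons_val, Matrix.add_apply, transpose_apply,
    trace_fin_three, adjugate_fin_three, dotProduct, Fin.sum_univ_three, sum_filter,
    Fintype.sum_prod_type, Fin.sum_univ_four, Fin.reduceLT, lt_self_iff_false, ↓reduceIte]
  ring
end

section
/- Let B be a real 3×3 matrix and K its Davenport K-matrix. For any q̄ = (q₁, q₂, q₃, q₄) ∈ ℝ⁴ with q₁² + q₂² + q₃² + q₄² = 1, let A(q̄) be the 3×3 rotation matrix A(q̄) = (q₄² − q₁² − q₂² − q₃²)·I₃ + 2vvᵀ − 2q₄·[v]ₓ, where v = (q₁, q₂, q₃)ᵀ and [v]ₓ is the skew-symmetric cross-product matrix of v. Then q̄ᵀ K q̄ = tr(A(q̄) Bᵀ). -/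
open Matrix

/-- The skew-symmetric cross-product matrix `[v]ₓ` of `v ∈ ℝ³`. -/
def crossMat (v : Fin 3 → ℝ) : Matrix (Fin 3) (Fin 3) ℝ :=
  !![0, -v 2, v 1;
     v 2, 0, -v 0;
     -v 1, v 0, 0]

/-- `Bᵀ - B = crossMat (davenportZ B)`. -/
def davenportZ (B : Matrix (Fin 3) (Fin 3) ℝ) : Fin 3 → ℝ :=
  ![B 1 2 - B 2 1, B 2 0 - B 0 2, B 0 1 - B 1 0]

theorem dotProduct_davenportK_mulVec (B : Matrix (Fin 3) (Fin 3) ℝ) (q : Fin 4 → ℝ) :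
    q ⬝ᵥ davenportK B *ᵥ q =
      ![q 0, q 1, q 2] ⬝ᵥ (B + Bᵀ) *ᵥ ![q 0, q 1, q 2]
        + 2 * q 3 * (davenportZ B ⬝ᵥ ![q 0, q 1, q 2])
        + B.trace * (q 3 ^ 2 - q 0 ^ 2 - q 1 ^ 2 - q 2 ^ 2) := by
  simp only [davenportK, davenportZ, dotProduct, mulVec, Fin.sum_univ_four, Fin.sum_univ_three,
    Matrix.add_apply, transpose_apply, of_apply, cons_val', cons_val_zero, cons_val_one, cons_val,
    cons_val_fin_one, Fin.isValue, Nat.succ_eq_add_one, Nat.reduceAdd]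
  ring

theorem trace_crossMat_mul_transpose (v : Fin 3 → ℝ) (B : Matrix (Fin 3) (Fin 3) ℝ) :
    (crossMat v * Bᵀ).trace = -(davenportZ B ⬝ᵥ v) := by
  simp only [crossMat, davenportZ, trace_fin_three, vecMul, dotProduct, Fin.sum_univ_three,
    cons_mul, empty_mul, Equiv.symm_apply_apply, of_apply, cons_val', transpose_apply, cons_val_zero,
    cons_val_one, cons_val, cons_val_fin_one, Fin.isValue, Nat.succ_eq_add_one, Nat.reduceAdd]
  ring

theorem quadForm_davenportK_eq_trace_general (B : Matrix (Fin 3) (Fin 3) ℝ)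
    (q : Fin 4 → ℝ)
    (v : Fin 3 → ℝ) (hv : v = ![q 0, q 1, q 2])
    (A : Matrix (Fin 3) (Fin 3) ℝ)
    (hA : A = (q 3 ^ 2 - q 0 ^ 2 - q 1 ^ 2 - q 2 ^ 2) • (1 : Matrix (Fin 3) (Fin 3) ℝ)
        + (2 : ℝ) • Matrix.vecMulVec v v - (2 * q 3) • crossMat v) :
    q ⬝ᵥ (davenportK B).mulVec q = (A * Bᵀ).trace := by
  have hsym : v ⬝ᵥ (B + Bᵀ) *ᵥ v = 2 * (v ⬝ᵥ B *ᵥ v) := by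
    rw [add_mulVec, dotProduct_add, dotProduct_transpose_mulVec]
    ring
  rw [dotProduct_davenportK_mulVec, ← hv, hsym, hA]
  simp only [Matrix.add_mul, Matrix.sub_mul, Matrix.smul_mul, one_mul, trace_add, trace_sub,
    trace_smul, trace_transpose, vecMulVec_mul, trace_vecMulVec, vecMul_transpose,
    trace_crossMat_mul_transpose, smul_eq_mul]
  ring

/-- For a unit quaternion `q̄ = (q₁,q₂,q₃,q₄)` with rotation matrix
`A(q̄) = (q₄² − q₁² − q₂² − q₃²)·I₃ + 2vvᵀ − 2q₄[v]ₓ`, `v = (q₁,q₂,q₃)ᵀ`,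
one has `q̄ᵀ K q̄ = tr(A(q̄) Bᵀ)`. -/
theorem quadForm_davenportK_eq_trace (B : Matrix (Fin 3) (Fin 3) ℝ)
    (q : Fin 4 → ℝ) (hq : q 0 ^ 2 + q 1 ^ 2 + q 2 ^ 2 + q 3 ^ 2 = 1)
    (v : Fin 3 → ℝ) (hv : v = ![q 0, q 1, q 2])
    (A : Matrix (Fin 3) (Fin 3) ℝ)
    (hA : A = (q 3 ^ 2 - q 0 ^ 2 - q 1 ^ 2 - q 2 ^ 2) • (1 : Matrix (Fin 3) (Fin 3) ℝ)
        + (2 : ℝ) • Matrix.vecMulVec v v - (2 * q 3) • crossMat v) :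
    q ⬝ᵥ (davenportK B).mulVec q = (A * Bᵀ).trace :=
  quadForm_davenportK_eq_trace_general B q v hv A hA
end

section
/- Let b_1,...,b_n and r_1,...,r_n be unit vectors in ℝ³, a_1,...,a_n real weights, B = Σ_{i=1}^n a_i b_i r_iᵀ, and K the Davenport K-matrix of B. For a unit vector q̄ = (q₁, q₂, q₃, q₄) ∈ ℝ⁴ let A(q̄) = (q₄² − q₁² − q₂² − q₃²)·I₃ + 2vvᵀ − 2q₄·[v]ₓ with v = (q₁, q₂, q₃)ᵀ. Then the minimum over the unit sphere of ℝ⁴ of Wahba's loss L(A(q̄)) = (1/2)·Σ_{i=1}^n a_i ‖b_i − A(q̄) r_i‖² equals Σ_{i=1}^n a_i − λ_max, where λ_max is the largest eigenvalue of K, and this minimum is attained exactly at the unit eigenvectors of K associated with λ_max. -/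
open Matrix

/-! For a unit quaternion `q`, `‖A(q) x‖ = |q|² ‖x‖`, so every residual satisfies
`‖bᵢ - A(q) rᵢ‖² = 2 - 2 ⟨bᵢ, A(q) rᵢ⟩` and the loss equals `Σ aᵢ - tr (A(q)ᵀ B)`. That trace is the
quadratic form `qᵀ K q`. Since `λ_max - K` is positive semidefinite, on the unit sphere
`qᵀ K q = λ_max - qᵀ (λ_max - K) q ≤ λ_max`, with equality exactly when `(λ_max - K) q = 0`. -/

namespace Matrix

variable {ι m n : Type*} [Fintype ι] [Fintype m] [Fintype n]

theorem trace_transpose_mul_sum_smul_vecMulVec (A : Matrix m n ℝ) (a : ι → ℝ)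
    (b : ι → m → ℝ) (r : ι → n → ℝ) :
    (Aᵀ * ∑ i, a i • vecMulVec (b i) (r i)).trace = ∑ i, a i * (b i ⬝ᵥ A *ᵥ r i) := by
  simp only [Matrix.mul_sum, Matrix.mul_smul, trace_sum, trace_smul, mul_vecMulVec,
    trace_vecMulVec, smul_eq_mul, mulVec_transpose, dotProduct_mulVec, dotProduct_comm]

variable [DecidableEq n] {K : Matrix n n ℝ} {lam : ℝ}

theorem IsHermitian.posSemidef_algebraMap_sub (hK : K.IsHermitian)
    (hmax : ∀ μ ∈ spectrum ℝ K, μ ≤ lam) : (algebraMap ℝ (Matrix n n ℝ) lam - K).PosSemidef := by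
  refine posSemidef_iff_isHermitian_and_spectrum_nonneg.2 ⟨?_, fun μ hμ => ?_⟩
  · exact (isHermitian_diagonal_of_self_adjoint _ (.all _)).sub hK
  · rw [← spectrum.singleton_sub_eq] at hμ
    obtain ⟨_, rfl, ν, hν, rfl⟩ := hμ
    exact sub_nonneg.2 (hmax ν hν)

theorem exists_dotProduct_self_eq_one_mulVec_eq_smul (hlam : lam ∈ spectrum ℝ K) :
    ∃ q : n → ℝ, q ⬝ᵥ q = 1 ∧ K *ᵥ q = lam • q := by
  rw [← spectrum_toLin', ← Module.End.hasEigenvalue_iff_mem_spectrum] at hlam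
  obtain ⟨v, hv⟩ := hlam.exists_hasEigenvector
  have hKv : K *ᵥ v = lam • v := by simpa using hv.apply_eq_smul
  have hpos : 0 < v ⬝ᵥ v := by simpa using dotProduct_self_star_pos_iff.2 hv.2
  refine ⟨(√(v ⬝ᵥ v))⁻¹ • v, ?_, by rw [mulVec_smul, hKv, smul_comm]⟩
  rw [smul_dotProduct, dotProduct_smul, smul_eq_mul, smul_eq_mul, ← mul_assoc, ← sq, inv_pow,
    Real.sq_sqrt hpos.le, inv_mul_cancel₀ hpos.ne']

theorem dotProduct_algebraMap_sub_mulVec (K : Matrix n n ℝ) (lam : ℝ) (q : n → ℝ) :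
    q ⬝ᵥ (algebraMap ℝ (Matrix n n ℝ) lam - K) *ᵥ q = lam * (q ⬝ᵥ q) - q ⬝ᵥ K *ᵥ q := by
  rw [sub_mulVec, Algebra.algebraMap_eq_smul_one, smul_mulVec, one_mulVec, dotProduct_sub,
    dotProduct_smul, smul_eq_mul]

theorem IsHermitian.dotProduct_mulVec_le (hK : K.IsHermitian)
    (hmax : ∀ μ ∈ spectrum ℝ K, μ ≤ lam) {q : n → ℝ} (hq : q ⬝ᵥ q = 1) :
    q ⬝ᵥ K *ᵥ q ≤ lam := by
  have := (hK.posSemidef_algebraMap_sub hmax).dotProduct_mulVec_nonneg q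
  rw [star_trivial, dotProduct_algebraMap_sub_mulVec, hq] at this
  linarith

theorem IsHermitian.dotProduct_mulVec_eq_iff (hK : K.IsHermitian)
    (hmax : ∀ μ ∈ spectrum ℝ K, μ ≤ lam) {q : n → ℝ} (hq : q ⬝ᵥ q = 1) :
    q ⬝ᵥ K *ᵥ q = lam ↔ K *ᵥ q = lam • q := by
  have := (hK.posSemidef_algebraMap_sub hmax).dotProduct_mulVec_zero_iff q
  rw [star_trivial, dotProduct_algebraMap_sub_mulVec, hq, mul_one, sub_eq_zero, sub_mulVec,
    Algebra.algebraMap_eq_smul_one, smul_mulVec, one_mulVec, sub_eq_zero] at this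
  rw [eq_comm, this, eq_comm]

end Matrix

open WithLp

noncomputable def wahbaLoss {ι m n : Type*} [Fintype ι] [Fintype m] [Fintype n] (a : ι → ℝ)
    (b : ι → EuclideanSpace ℝ m) (r : ι → EuclideanSpace ℝ n) (A : Matrix m n ℝ) : ℝ :=
  1 / 2 * ∑ i, a i * ‖b i - toLp 2 (A *ᵥ r i)‖ ^ 2

theorem wahbaLoss_eq_sum_sub_trace {ι m n : Type*} [Fintype ι] [Fintype m] [Fintype n]
    (a : ι → ℝ) (b : ι → EuclideanSpace ℝ m) (r : ι → EuclideanSpace ℝ n) (A : Matrix m n ℝ)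
    (hb : ∀ i, ‖b i‖ = 1) (hAr : ∀ i, ‖toLp 2 (A *ᵥ r i)‖ = 1) :
    wahbaLoss a b r A = ∑ i, a i - (Aᵀ * ∑ i, a i • vecMulVec (b i) (r i)).trace := by
  have hterm : ∀ i, ‖b i - toLp 2 (A *ᵥ r i)‖ ^ 2 = 2 - 2 * (b i ⬝ᵥ A *ᵥ r i) := by
    intro i
    rw [norm_sub_sq_real, hb i, hAr i, EuclideanSpace.inner_eq_star_dotProduct, star_trivial,
      dotProduct_comm]
    ring
  simp_rw [wahbaLoss, hterm, trace_transpose_mul_sum_smul_vecMulVec, Finset.mul_sum,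
    ← Finset.sum_sub_distrib]
  congr 1
  ext i
  ring

theorem davenportK_isHermitian (B : Matrix (Fin 3) (Fin 3) ℝ) : (davenportK B).IsHermitian := by
  ext i j
  fin_cases i <;> fin_cases j <;> simp [davenportK] <;> ring

noncomputable def attitudeMatrix (q : Fin 4 → ℝ) : Matrix (Fin 3) (Fin 3) ℝ :=
  (q 3 ^ 2 - q 0 ^ 2 - q 1 ^ 2 - q 2 ^ 2) • (1 : Matrix (Fin 3) (Fin 3) ℝ)
    + (2 : ℝ) • vecMulVec ![q 0, q 1, q 2] ![q 0, q 1, q 2]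
    - (2 * q 3) • crossMat ![q 0, q 1, q 2]

theorem attitudeMatrix_eq (q : Fin 4 → ℝ) : attitudeMatrix q =
    !![q 3 ^ 2 + q 0 ^ 2 - q 1 ^ 2 - q 2 ^ 2, 2 * (q 0 * q 1 + q 2 * q 3), 2 * (q 0 * q 2 - q 1 * q 3);
       2 * (q 0 * q 1 - q 2 * q 3), q 3 ^ 2 - q 0 ^ 2 + q 1 ^ 2 - q 2 ^ 2, 2 * (q 1 * q 2 + q 0 * q 3);
       2 * (q 0 * q 2 + q 1 * q 3), 2 * (q 1 * q 2 - q 0 * q 3), q 3 ^ 2 - q 0 ^ 2 - q 1 ^ 2 + q 2 ^ 2] := by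
  ext i j
  fin_cases i <;> fin_cases j <;> simp [attitudeMatrix, crossMat] <;> ring

theorem attitudeMatrix_mulVec_dotProduct_self (q : Fin 4 → ℝ) (x : Fin 3 → ℝ) :
    (attitudeMatrix q *ᵥ x) ⬝ᵥ (attitudeMatrix q *ᵥ x) = (q ⬝ᵥ q) ^ 2 * (x ⬝ᵥ x) := by
  simp only [dotProduct, mulVec, attitudeMatrix_eq, Fin.isValue, of_apply, cons_val',
    cons_val_fin_one, Fin.sum_univ_three, cons_val_zero, cons_val_one, cons_val, Fin.sum_univ_four]
  ring

theorem norm_toLp_attitudeMatrix_mulVec (q : Fin 4 → ℝ) (x : EuclideanSpace ℝ (Fin 3)) :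
    ‖toLp 2 (attitudeMatrix q *ᵥ x)‖ = (q ⬝ᵥ q) * ‖x‖ := by
  have hq : 0 ≤ q ⬝ᵥ q := by simpa using dotProduct_self_star_nonneg q
  rw [← sq_eq_sq₀ (norm_nonneg _) (by positivity), mul_pow, ← real_inner_self_eq_norm_sq,
    ← real_inner_self_eq_norm_sq, EuclideanSpace.inner_eq_star_dotProduct,
    EuclideanSpace.inner_eq_star_dotProduct, star_trivial, star_trivial,
    attitudeMatrix_mulVec_dotProduct_self]

theorem trace_transpose_attitudeMatrix_mul (B : Matrix (Fin 3) (Fin 3) ℝ) (q : Fin 4 → ℝ) :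
    ((attitudeMatrix q)ᵀ * B).trace = q ⬝ᵥ davenportK B *ᵥ q := by
  simp only [trace, attitudeMatrix_eq, Fin.isValue, diag_apply, mul_apply, transpose_apply,
    of_apply, cons_val', cons_val_fin_one, Fin.sum_univ_three, cons_val_zero, cons_val_one,
    cons_val, dotProduct, mulVec, davenportK, Matrix.add_apply, add_sub_add_right_eq_sub,
    Fin.sum_univ_four]
  ring

/-- The minimum of Wahba's loss `L(A(q̄))` over the unit sphere of `ℝ⁴` equals
`Σ aᵢ − λ_max`, where `λ_max` is the largest eigenvalue of Davenport's K-matrix,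
and the minimum is attained exactly at the unit eigenvectors of `K` for `λ_max`. -/
theorem wahba_min_over_quaternions (n : ℕ)
    (b r : Fin n → EuclideanSpace ℝ (Fin 3)) (a : Fin n → ℝ)
    (hb : ∀ i, ‖b i‖ = 1) (hr : ∀ i, ‖r i‖ = 1)
    (B : Matrix (Fin 3) (Fin 3) ℝ)
    (hB : B = ∑ i, a i • Matrix.vecMulVec (b i) (r i))
    (Aq : (Fin 4 → ℝ) → Matrix (Fin 3) (Fin 3) ℝ)
    (hAq : ∀ q : Fin 4 → ℝ, Aq q
      = (q 3 ^ 2 - q 0 ^ 2 - q 1 ^ 2 - q 2 ^ 2) • (1 : Matrix (Fin 3) (Fin 3) ℝ)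
        + (2 : ℝ) • Matrix.vecMulVec ![q 0, q 1, q 2] ![q 0, q 1, q 2]
        - (2 * q 3) • crossMat ![q 0, q 1, q 2])
    (L : (Fin 4 → ℝ) → ℝ)
    (hL : ∀ q : Fin 4 → ℝ, L q = (1 / 2 : ℝ) *
      ∑ i, a i * ‖b i - (WithLp.equiv 2 (Fin 3 → ℝ)).symm ((Aq q).mulVec (r i))‖ ^ 2)
    (lam : ℝ) (hlam : lam ∈ spectrum ℝ (davenportK B))
    (hmax : ∀ μ ∈ spectrum ℝ (davenportK B), μ ≤ lam) :
    IsLeast {x : ℝ | ∃ q : Fin 4 → ℝ, (∑ j, q j ^ 2) = 1 ∧ L q = x} ((∑ i, a i) - lam)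
      ∧ ∀ q : Fin 4 → ℝ, (∑ j, q j ^ 2) = 1 →
        (L q = (∑ i, a i) - lam ↔ (davenportK B).mulVec q = lam • q) := by
  have hA : Aq = attitudeMatrix := funext hAq
  have hsum_sq : ∀ q : Fin 4 → ℝ, ∑ j, q j ^ 2 = q ⬝ᵥ q := fun q => by simp [dotProduct, sq]
  have hLK : ∀ q : Fin 4 → ℝ, q ⬝ᵥ q = 1 → L q = ∑ i, a i - q ⬝ᵥ davenportK B *ᵥ q := by
    intro q hq
    have hAr i : ‖toLp 2 (attitudeMatrix q *ᵥ r i)‖ = 1 := by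
      rw [norm_toLp_attitudeMatrix_mulVec, hq, hr i, one_mul]
    rw [hL, hA, WithLp.equiv_symm_apply, ← wahbaLoss, wahbaLoss_eq_sum_sub_trace a b r _ hb hAr,
      ← hB, trace_transpose_attitudeMatrix_mul]
  have hK := davenportK_isHermitian B
  simp_rw [hsum_sq]
  refine ⟨⟨?_, ?_⟩, fun q hq => ?_⟩
  · obtain ⟨q, hq, hKq⟩ := exists_dotProduct_self_eq_one_mulVec_eq_smul hlam
    refine ⟨q, hq, ?_⟩
    rw [hLK q hq, hKq, dotProduct_smul, hq, smul_eq_mul, mul_one]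
  · rintro _ ⟨q, hq, rfl⟩
    linarith [hLK q hq, hK.dotProduct_mulVec_le hmax hq]
  · rw [hLK q hq, sub_right_inj, hK.dotProduct_mulVec_eq_iff hmax hq]
end

section
/- Let B be a real 3×3 matrix and K its Davenport K-matrix. Every eigenvalue λ of K satisfies the quartic equation λ⁴ + b·λ² + c·λ + d = 0, where b = −2(tr B)² + tr(adj(B + Bᵀ)) − zᵀz, c = −tr(adj K), d = det K, and z = (B₂₃ − B₃₂, B₃₁ − B₁₃, B₁₂ − B₂₁)ᵀ. -/
/-
Every eigenvalue of `K` is a root of `det (λ - K)`, and for any 4 × 4 matrix `A` Newton's identity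
`e₂ = (tr A² - tr (A²)) / 2` gives `det (λ - A) = λ⁴ - tr A λ³ + e₂ λ² - tr (adj A) λ + det A`.
For Davenport's matrix `tr K = 0`, and `tr (K²) = 4 (tr B)² - 2 tr (adj (B + Bᵀ)) + 2 zᵀz`, so the
coefficient of `λ²` is the stated `b`.
-/

open Matrix

namespace Matrix

variable {R : Type*} [CommRing R]

theorem trace_adjugate_fin_succ {n : ℕ} (A : Matrix (Fin (n + 1)) (Fin (n + 1)) R) :
    A.adjugate.trace = ∑ i : Fin (n + 1), (A.submatrix i.succAbove i.succAbove).det := by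
  simp [trace, adjugate_fin_succ_eq_det_submatrix, ← two_mul, pow_mul]

/-- The factor `2` clears the denominator of Newton's identity in the coefficient of `x²`. -/
theorem two_mul_det_scalar_sub_fin_four (A : Matrix (Fin 4) (Fin 4) R) (x : R) :
    2 * (scalar (Fin 4) x - A).det =
      2 * x ^ 4 - 2 * A.trace * x ^ 3 + (A.trace ^ 2 - (A * A).trace) * x ^ 2
        - 2 * A.adjugate.trace * x + 2 * A.det := by
  rw [trace_adjugate_fin_succ, det_succ_row_zero, det_succ_row_zero A]
  simp +decide [Fin.sum_univ_succ, det_fin_three, trace, mul_apply, Fin.succAbove,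
    diagonal_apply]
  ring

end Matrix

theorem trace_davenportK (B : Matrix (Fin 3) (Fin 3) ℝ) : (davenportK B).trace = 0 := by
  simp [davenportK, trace, Fin.sum_univ_succ]
  ring

theorem trace_davenportK_mul_self (B : Matrix (Fin 3) (Fin 3) ℝ) :
    let z : Fin 3 → ℝ := ![B 1 2 - B 2 1, B 2 0 - B 0 2, B 0 1 - B 1 0]
    (davenportK B * davenportK B).trace =
      4 * B.trace ^ 2 - 2 * (B + Bᵀ).adjugate.trace + 2 * (z ⬝ᵥ z) := by
  simp [davenportK, trace, Fin.sum_univ_succ, adjugate_fin_three, dotProduct]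
  ring

/-- Every eigenvalue `λ` of Davenport's K-matrix satisfies
`λ⁴ + b·λ² + c·λ + d = 0` with `b = −2(tr B)² + tr(adj(B + Bᵀ)) − zᵀz`,
`c = −tr(adj K)` and `d = det K`. -/
theorem davenportK_eigenvalue_quartic (B : Matrix (Fin 3) (Fin 3) ℝ)
    (z : Fin 3 → ℝ) (hz : z = ![B 1 2 - B 2 1, B 2 0 - B 0 2, B 0 1 - B 1 0])
    (lam : ℝ) (hlam : lam ∈ spectrum ℝ (davenportK B)) :
    lam ^ 4 + (-2 * B.trace ^ 2 + (B + Bᵀ).adjugate.trace - z ⬝ᵥ z) * lam ^ 2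
      + (-(davenportK B).adjugate.trace) * lam + (davenportK B).det = 0 := by
  subst hz
  have hroot : (scalar (Fin 4) lam - davenportK B).det = 0 := by
    rw [← eval_charpoly]
    exact mem_spectrum_iff_isRoot_charpoly.mp hlam
  have hexpand := two_mul_det_scalar_sub_fin_four (davenportK B) lam
  rw [hroot, trace_davenportK, trace_davenportK_mul_self] at hexpand
  linarith
end

section
/- Let a, b, c, d ∈ ℂ and suppose y ∈ ℂ is a root of the resolvent cubic y³ + p·y + q = 0, where p = ac − b²/3 − 4d and q = abc/3 − a²d − 2b³/27 − c² + 8bd/3. Then there exist g₁, g₂, h₁, h₂ ∈ ℂ satisfying g₁ + g₂ = a, g₁g₂ = 2b/3 − y, h₁ + h₂ = y + b/3, h₁h₂ = d, and g₁h₂ + g₂h₁ = c; consequently x⁴ + a·x³ + b·x² + c·x + d = (x² + g₁·x + h₁)·(x² + g₂·x + h₂) as polynomials over ℂ. -/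
/-!
Take `g₁, g₂` with sum `a` and product `2b/3 − y`, and `h₁, h₂` with sum `y + b/3` and
product `d`. The two cross sums `g₁h₂ + g₂h₁` and `g₁h₁ + g₂h₂` have sum `a(y + b/3)` and a
product symmetric in the `g`'s and in the `h`'s, so they are the roots of a quadratic whose
coefficients depend on `a, b, d, y` only; that `c` is one of its roots is exactly the resolvent
equation. Swapping `h₁` and `h₂` if necessary makes `g₁h₂ + g₂h₁ = c`, and then the quartic is the
product of the two quadratics by comparing coefficients.
-/

open Polynomial

theorem exists_add_eq_mul_eq {K : Type*} [Field K] [IsAlgClosed K] (s p : K) :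
    ∃ x y : K, x + y = s ∧ x * y = p := by
  obtain ⟨x, hx⟩ := IsAlgClosed.exists_root (C 1 * X ^ 2 + C (-s) * X + C p)
    (by rw [degree_quadratic one_ne_zero]; decide)
  refine ⟨x, s - x, by ring, ?_⟩
  simp only [IsRoot, eval_add, eval_mul, eval_C, eval_pow, eval_X] at hx
  linear_combination -hx

theorem eq_or_eq_of_mul_add_sub_eq_mul {R : Type*} [CommRing R] [NoZeroDivisors R]
    {u v c : R} (h : c * (u + v - c) = u * v) : c = u ∨ c = v := by
  have hprod : (c - u) * (c - v) = 0 := by linear_combination -h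
  rcases mul_eq_zero.mp hprod with hu | hv
  · exact .inl (sub_eq_zero.mp hu)
  · exact .inr (sub_eq_zero.mp hv)

theorem cross_sum_eq_or_eq {R : Type*} [CommRing R] [NoZeroDivisors R] {g₁ g₂ h₁ h₂ c : R}
    (h : c * ((g₁ + g₂) * (h₁ + h₂) - c)
      = g₁ * g₂ * ((h₁ + h₂) ^ 2 - 2 * (h₁ * h₂)) + h₁ * h₂ * ((g₁ + g₂) ^ 2 - 2 * (g₁ * g₂))) :
    c = g₁ * h₂ + g₂ * h₁ ∨ c = g₁ * h₁ + g₂ * h₂ :=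
  eq_or_eq_of_mul_add_sub_eq_mul (by linear_combination h)

theorem quartic_eq_mul_quadratics {R : Type*} [CommRing R] {a b c d g₁ g₂ h₁ h₂ : R}
    (ha : g₁ + g₂ = a) (hb : g₁ * g₂ + (h₁ + h₂) = b) (hc : g₁ * h₂ + g₂ * h₁ = c)
    (hd : h₁ * h₂ = d) :
    (X ^ 4 + C a * X ^ 3 + C b * X ^ 2 + C c * X + C d : R[X])
      = (X ^ 2 + C g₁ * X + C h₁) * (X ^ 2 + C g₂ * X + C h₂) := by
  subst ha hb hc hd
  simp only [map_add, map_mul]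
  ring

/-- If `y` is a root of the resolvent cubic `y³ + p·y + q = 0` with
`p = ac − b²/3 − 4d` and `q = abc/3 − a²d − 2b³/27 − c² + 8bd/3`, then the quartic
`x⁴ + a x³ + b x² + c x + d` factors over `ℂ` into two quadratics whose
coefficients satisfy Shmakov's relations. -/
theorem quartic_factorization_from_resolvent (a b c d y : ℂ)
    (hy : y ^ 3 + (a * c - b ^ 2 / 3 - 4 * d) * y
      + (a * b * c / 3 - a ^ 2 * d - 2 * b ^ 3 / 27 - c ^ 2 + 8 * b * d / 3) = 0) :
    ∃ g₁ g₂ h₁ h₂ : ℂ,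
      g₁ + g₂ = a ∧ g₁ * g₂ = 2 * b / 3 - y ∧ h₁ + h₂ = y + b / 3 ∧ h₁ * h₂ = d ∧
      g₁ * h₂ + g₂ * h₁ = c ∧
      (X ^ 4 + C a * X ^ 3 + C b * X ^ 2 + C c * X + C d : ℂ[X])
        = (X ^ 2 + C g₁ * X + C h₁) * (X ^ 2 + C g₂ * X + C h₂) := by
  obtain ⟨g₁, g₂, hg_sum, hg_prod⟩ := exists_add_eq_mul_eq a (2 * b / 3 - y)
  obtain ⟨h₁, h₂, hh_sum, hh_prod, hc⟩ :
      ∃ h₁ h₂ : ℂ, h₁ + h₂ = y + b / 3 ∧ h₁ * h₂ = d ∧ g₁ * h₂ + g₂ * h₁ = c := by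
    obtain ⟨h₁, h₂, hs, hp⟩ := exists_add_eq_mul_eq (y + b / 3) d
    rcases cross_sum_eq_or_eq (c := c) (g₁ := g₁) (g₂ := g₂) (h₁ := h₁) (h₂ := h₂)
      (by rw [hg_sum, hg_prod, hs, hp]; linear_combination hy) with hc | hc
    · exact ⟨h₁, h₂, hs, hp, hc.symm⟩
    · exact ⟨h₂, h₁, by rw [add_comm, hs], by rw [mul_comm, hp], hc.symm⟩
  refine ⟨g₁, g₂, h₁, h₂, hg_sum, hg_prod, hh_sum, hh_prod, hc,
    quartic_eq_mul_quadratics hg_sum ?_ hc hh_prod⟩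
  rw [hg_prod, hh_sum]
  ring
end
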